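/- Let n ≥ 1 and let Σ ⊆ ℂ∖{0} be closed under λ ↦ 1/λ. Let S = diag(−1,…,−1,1,…,1) with n+1 entries −1 followed by n−1 entries 1, and σ₁(X) = S X S. Let a ∈ M(2n,ℂ) be constant, set ā = S a S and E(x,λ) = exp(x(λ a + λ⁻¹ ā)). Suppose m₊, m₋ : ℝ × Σ → GL(2n,ℂ) and V : Σ → M(2n,ℂ) satisfy, for all x ∈ ℝ and λ ∈ Σ: m₊(x,λ) = m₋(x,λ) E(x,λ)⁻¹ V(λ) E(x,λ), σ₁(m₊(x,1/λ)) = m₋(x,λ), and σ₁(m₋(x,1/λ)) = m₊(x,λ). Then σ₁(V(1/λ)) V(λ) = I for all λ ∈ Σ. -/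

import Mathlib

/-! At `x = 0` the factor `E` is the identity, so the jump relation reads `m₊ = m₋ V`.
Conjugating its instance at `1/λ` by the multiplicative involution `σ₁` and using the two
symmetries gives `m₋(λ) = m₋(λ) V(λ) σ₁(V(1/λ))`; cancelling the invertible `m₋(λ)` leaves
`V(λ) σ₁(V(1/λ)) = I`, and a one-sided inverse of a square matrix is two-sided. -/

noncomputable section

open Matrix

/-- S = diag(−1,…,−1,1,…,1) with n+1 entries −1 followed by n−1 entries 1,
    on Fin n ⊕ Fin n -/
def Smat (n : ℕ) : Matrix (Fin n ⊕ Fin n) (Fin n ⊕ Fin n) ℂ :=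
  Matrix.diagonal (Sum.elim (fun _ => (-1 : ℂ)) (fun k => if (k : ℕ) = 0 then -1 else 1))

/-- σ₁(X) = S X S -/
def sigma1 {n : ℕ} (X : Matrix (Fin n ⊕ Fin n) (Fin n ⊕ Fin n) ℂ) :
    Matrix (Fin n ⊕ Fin n) (Fin n ⊕ Fin n) ℂ :=
  Smat n * X * Smat n

/-- E(x,λ) = exp(x(λ a + λ⁻¹ ā)) -/
def Emat {n : ℕ} (a abar : Matrix (Fin n ⊕ Fin n) (Fin n ⊕ Fin n) ℂ) (x : ℝ) (lam : ℂ) :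
    Matrix (Fin n ⊕ Fin n) (Fin n ⊕ Fin n) ℂ :=
  NormedSpace.exp ((x : ℂ) • (lam • a + lam⁻¹ • abar))

theorem mul_map_eq_one_of_jump_of_symm {M : Type*} [Monoid M] (σ : M →ₙ* M)
    {mp mm mp' mm' v v' : M} (hmm : IsUnit mm) (hjump : mp = mm * v) (hjump' : mp' = mm' * v')
    (hsym : σ mp' = mm) (hsym' : σ mm' = mp) : v * σ v' = 1 := by
  refine hmm.mul_left_cancel ?_
  calc mm * (v * σ v') = σ mm' * σ v' := by rw [hsym', hjump, mul_assoc]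
    _ = mm * 1 := by rw [← map_mul, ← hjump', hsym, mul_one]

theorem Smat_mul_self (n : ℕ) : Smat n * Smat n = 1 := by
  rw [Smat, diagonal_mul_diagonal, ← diagonal_one]
  congr 1
  ext (i | k)
  · simp
  · by_cases hk : (k : ℕ) = 0 <;> simp [hk]

def sigma1MulHom (n : ℕ) :
    Matrix (Fin n ⊕ Fin n) (Fin n ⊕ Fin n) ℂ →ₙ* Matrix (Fin n ⊕ Fin n) (Fin n ⊕ Fin n) ℂ where
  toFun := sigma1
  map_mul' A B := by
    simp only [sigma1]
    calc Smat n * (A * B) * Smat n = Smat n * A * (Smat n * Smat n) * B * Smat n := by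
          rw [Smat_mul_self]; noncomm_ring
      _ = Smat n * A * Smat n * (Smat n * B * Smat n) := by noncomm_ring

theorem Emat_zero {n : ℕ} (a abar : Matrix (Fin n ⊕ Fin n) (Fin n ⊕ Fin n) ℂ) (lam : ℂ) :
    Emat a abar 0 lam = 1 := by
  simp [Emat]

theorem sigma1_symmetry_of_scattering_data_general (n : ℕ)
    (Sa : Set ℂ) (hSinv : ∀ lam ∈ Sa, lam⁻¹ ∈ Sa)
    (a : Matrix (Fin n ⊕ Fin n) (Fin n ⊕ Fin n) ℂ)
    (abar : Matrix (Fin n ⊕ Fin n) (Fin n ⊕ Fin n) ℂ)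
    (mp mm : ℝ → ℂ → Matrix (Fin n ⊕ Fin n) (Fin n ⊕ Fin n) ℂ)
    (V : ℂ → Matrix (Fin n ⊕ Fin n) (Fin n ⊕ Fin n) ℂ)
    (hmmU : ∀ x : ℝ, ∀ lam ∈ Sa, IsUnit (mm x lam))
    (hjump : ∀ x : ℝ, ∀ lam ∈ Sa,
      mp x lam = mm x lam * (Emat a abar x lam)⁻¹ * V lam * Emat a abar x lam)
    (hsym1 : ∀ x : ℝ, ∀ lam ∈ Sa, sigma1 (mp x lam⁻¹) = mm x lam)
    (hsym2 : ∀ x : ℝ, ∀ lam ∈ Sa, sigma1 (mm x lam⁻¹) = mp x lam) :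
    ∀ lam ∈ Sa, sigma1 (V lam⁻¹) * V lam = 1 := by
  have hjump0 : ∀ lam ∈ Sa, mp 0 lam = mm 0 lam * V lam := fun lam hlam => by
    simpa [Emat_zero] using hjump 0 lam hlam
  intro lam hlam
  exact mul_eq_one_comm.mp <| mul_map_eq_one_of_jump_of_symm (sigma1MulHom n)
    (hmmU 0 lam hlam) (hjump0 lam hlam) (hjump0 lam⁻¹ (hSinv lam hlam))
    (hsym1 0 lam hlam) (hsym2 0 lam hlam)

theorem sigma1_symmetry_of_scattering_data (n : ℕ) (hn : 1 ≤ n)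
    (Sa : Set ℂ) (hS0 : (0 : ℂ) ∉ Sa) (hSinv : ∀ lam ∈ Sa, lam⁻¹ ∈ Sa)
    (a : Matrix (Fin n ⊕ Fin n) (Fin n ⊕ Fin n) ℂ)
    (abar : Matrix (Fin n ⊕ Fin n) (Fin n ⊕ Fin n) ℂ)
    (habar : abar = Smat n * a * Smat n)
    (mp mm : ℝ → ℂ → Matrix (Fin n ⊕ Fin n) (Fin n ⊕ Fin n) ℂ)
    (V : ℂ → Matrix (Fin n ⊕ Fin n) (Fin n ⊕ Fin n) ℂ)
    (hmpU : ∀ x : ℝ, ∀ lam ∈ Sa, IsUnit (mp x lam))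
    (hmmU : ∀ x : ℝ, ∀ lam ∈ Sa, IsUnit (mm x lam))
    (hjump : ∀ x : ℝ, ∀ lam ∈ Sa,
      mp x lam = mm x lam * (Emat a abar x lam)⁻¹ * V lam * Emat a abar x lam)
    (hsym1 : ∀ x : ℝ, ∀ lam ∈ Sa, sigma1 (mp x lam⁻¹) = mm x lam)
    (hsym2 : ∀ x : ℝ, ∀ lam ∈ Sa, sigma1 (mm x lam⁻¹) = mp x lam) :
    ∀ lam ∈ Sa, sigma1 (V lam⁻¹) * V lam = 1 :=
  sigma1_symmetry_of_scattering_data_general n Sa hSinv a abar mp mm V hmmU hjump hsym1 hsym2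

end
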